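/- arXiv:2011.00672 — 4 statements merged into one kernel-verified Lean document; each statement's English description precedes it below -/
import Mathlib

section
/- Let k be an odd positive integer and let G be a k-edge-connected finite graph. Then any two k-edge-cuts in G do not cross; that is, if δ(A) and δ(B) are edge-cuts of size k, then at least one of A∩B, A\B, B\A, and the complement of A∪B is empty. -/
/-!
Writing `d X` for the size of `δ(X)`, submodularity gives `d(A ∩ B) + d(A ∪ B) ≤ d A + d B = 2k`,
and applied to `A` and `Bᶜ` (note `δ(Bᶜ) = δ(B)`) it gives `d(A \ B) + d(B \ A) ≤ 2k`. If the cuts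
crossed, all four corners would have both sides nonempty, so each term is at least `k` and hence
`d(A ∩ B) = d(A \ B) = k`. But `δ` turns symmetric differences into symmetric differences, and
`A = (A ∩ B) ∆ (A \ B)`, so `d(A ∩ B) + d(A \ B) ≡ d A (mod 2)`, i.e. `2k ≡ k`, contradicting
that `k` is odd.
-/

/-- The edge cut `δ(A)` of a multigraph `ends : E → V × V`: edges with exactly
one endpoint in `A`. -/
def edgeCut {V E : Type} (ends : E → V × V) (A : Set V) : Set E :=
  {e | ((ends e).1 ∈ A ∧ (ends e).2 ∉ A) ∨ ((ends e).1 ∉ A ∧ (ends e).2 ∈ A)}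

open scoped symmDiff

theorem Set.ncard_symmDiff_add_two_mul_ncard_inter {α : Type*} (s t : Set α)
    (hs : s.Finite := by toFinite_tac) (ht : t.Finite := by toFinite_tac) :
    (s ∆ t).ncard + 2 * (s ∩ t).ncard = s.ncard + t.ncard := by
  have hunion : (s ∆ t).ncard + (s ∩ t).ncard = (s ∪ t).ncard :=
    calc (s ∆ t).ncard + (s ∩ t).ncard = (s ∆ t ∪ s ∩ t).ncard :=
          (Set.ncard_union_eq (disjoint_symmDiff_inf s t)
            ((hs.union ht).subset symmDiff_subset_union) (hs.inter_of_left t)).symm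
      _ = (s ∪ t).ncard := congrArg Set.ncard (symmDiff_sup_inf s t)
  rw [← Set.ncard_union_add_ncard_inter s t hs ht, ← hunion]
  ring

section EdgeCut

variable {V E : Type} (ends : E → V × V)

theorem mem_edgeCut_iff {A : Set V} {e : E} :
    e ∈ edgeCut ends A ↔ ¬((ends e).1 ∈ A ↔ (ends e).2 ∈ A) :=
  show _ ∨ _ ↔ _ by tauto

theorem edgeCut_compl (A : Set V) : edgeCut ends Aᶜ = edgeCut ends A := by
  ext e
  simp only [mem_edgeCut_iff, Set.mem_compl_iff]
  tauto

theorem edgeCut_symmDiff (A B : Set V) :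
    edgeCut ends (A ∆ B) = edgeCut ends A ∆ edgeCut ends B := by
  ext e
  simp only [mem_edgeCut_iff, Set.mem_symmDiff]
  tauto

variable [Finite E]

theorem ncard_edgeCut_inter_add_ncard_edgeCut_union_le (A B : Set V) :
    (edgeCut ends (A ∩ B)).ncard + (edgeCut ends (A ∪ B)).ncard ≤
      (edgeCut ends A).ncard + (edgeCut ends B).ncard := by
  have hunion : edgeCut ends (A ∩ B) ∪ edgeCut ends (A ∪ B) ⊆ edgeCut ends A ∪ edgeCut ends B := by
    intro e
    simp only [Set.mem_union, mem_edgeCut_iff, Set.mem_inter_iff]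
    tauto
  have hinter : edgeCut ends (A ∩ B) ∩ edgeCut ends (A ∪ B) ⊆ edgeCut ends A ∩ edgeCut ends B := by
    intro e
    simp only [Set.mem_inter_iff, mem_edgeCut_iff, Set.mem_union]
    tauto
  calc (edgeCut ends (A ∩ B)).ncard + (edgeCut ends (A ∪ B)).ncard
      = (edgeCut ends (A ∩ B) ∪ edgeCut ends (A ∪ B)).ncard +
          (edgeCut ends (A ∩ B) ∩ edgeCut ends (A ∪ B)).ncard :=
        (Set.ncard_union_add_ncard_inter _ _).symm
    _ ≤ (edgeCut ends A ∪ edgeCut ends B).ncard + (edgeCut ends A ∩ edgeCut ends B).ncard :=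
        add_le_add (Set.ncard_le_ncard hunion) (Set.ncard_le_ncard hinter)
    _ = (edgeCut ends A).ncard + (edgeCut ends B).ncard := Set.ncard_union_add_ncard_inter _ _

theorem ncard_edgeCut_diff_add_ncard_edgeCut_diff_le (A B : Set V) :
    (edgeCut ends (A \ B)).ncard + (edgeCut ends (B \ A)).ncard ≤
      (edgeCut ends A).ncard + (edgeCut ends B).ncard := by
  have h := ncard_edgeCut_inter_add_ncard_edgeCut_union_le ends A Bᶜ
  rwa [edgeCut_compl, ← Set.sdiff_eq, ← Set.compl_sdiff, edgeCut_compl] at h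

theorem ncard_edgeCut_inter_add_ncard_edgeCut_diff (A B : Set V) :
    (edgeCut ends (A ∩ B)).ncard + (edgeCut ends (A \ B)).ncard =
      (edgeCut ends A).ncard + 2 * (edgeCut ends (A ∩ B) ∩ edgeCut ends (A \ B)).ncard := by
  rw [← Set.ncard_symmDiff_add_two_mul_ncard_inter, ← edgeCut_symmDiff]
  congr 3
  ext v
  simp only [Set.mem_symmDiff, Set.mem_inter_iff, Set.mem_sdiff]
  tauto

end EdgeCut

theorem stmt_1_general {V E : Type} [Fintype E] (ends : E → V × V)
    (k : ℕ) (hodd : Odd k)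
    (hconn : ∀ A : Set V, A.Nonempty → Aᶜ.Nonempty → k ≤ (edgeCut ends A).ncard)
    (A B : Set V)
    (hA : (edgeCut ends A).ncard = k)
    (hB : (edgeCut ends B).ncard = k) :
    A ∩ B = ∅ ∨ A \ B = ∅ ∨ B \ A = ∅ ∨ (A ∪ B)ᶜ = ∅ := by
  simp only [← Set.not_nonempty_iff_eq_empty]
  by_contra! hcross
  obtain ⟨⟨x, hxA, hxB⟩, ⟨y, hyA, hyB⟩, ⟨z, hzB, hzA⟩, hout⟩ := hcross
  have hInter := hconn (A ∩ B) ⟨x, hxA, hxB⟩ ⟨y, fun hy => hyB hy.2⟩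
  have hUnion := hconn (A ∪ B) ⟨x, Or.inl hxA⟩ hout
  have hAdiff := hconn (A \ B) ⟨y, hyA, hyB⟩ ⟨x, fun hx => hx.2 hxB⟩
  have hBdiff := hconn (B \ A) ⟨z, hzB, hzA⟩ ⟨x, fun hx => hx.2 hxA⟩
  have hsubmod := ncard_edgeCut_inter_add_ncard_edgeCut_union_le ends A B
  have hposimod := ncard_edgeCut_diff_add_ncard_edgeCut_diff_le ends A B
  have hparity := ncard_edgeCut_inter_add_ncard_edgeCut_diff ends A B
  obtain ⟨j, rfl⟩ := hodd
  omega

/-- Let `k` be an odd positive integer and `G` a `k`-edge-connected finite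
graph.  Then any two `k`-edge-cuts do not cross: at least one of
`A ∩ B`, `A \ B`, `B \ A`, `(A ∪ B)ᶜ` is empty. -/
theorem stmt_1 {V E : Type} [Fintype V] [Fintype E] (ends : E → V × V)
    (k : ℕ) (hpos : 0 < k) (hodd : Odd k)
    (hconn : ∀ A : Set V, A.Nonempty → Aᶜ.Nonempty → k ≤ (edgeCut ends A).ncard)
    (A B : Set V)
    (hA : (edgeCut ends A).ncard = k) (hAne : A.Nonempty) (hAco : Aᶜ.Nonempty)
    (hB : (edgeCut ends B).ncard = k) (hBne : B.Nonempty) (hBco : Bᶜ.Nonempty) :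
    A ∩ B = ∅ ∨ A \ B = ∅ ∨ B \ A = ∅ ∨ (A ∪ B)ᶜ = ∅ :=
  stmt_1_general ends k hodd hconn A B hA hB
end

section
/- For every odd integer i ≥ 5 and every prescription function p: V(B_i) → Z_3 with sum of values equal to 0 in Z_3, the circulant graph B_i admits an orientation such that at each vertex v, the number of edges directed into v minus the number directed out of v is congruent to p(v) modulo 3. -/
/-!
Since `i` is odd, `2 * ((i - 1) / 2) = -1` in `ZMod i`, so doubling `v ↦ 2 v` maps `B_i` onto the
square of the cycle `C_i`, with jumps `2` and `1`. There the task is to find `{0,1}`-valued `a, b`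
on `ZMod n` with `(a (w - 1) - a w) + (b (w - 2) - b w) = q w`, the bits recording the orientation
of the edges `w → w + 1` and `w → w + 2`. They are built greedily along `1, …, n - 1`: with `Q` the
partial sums of `q`, choose `b t ∈ {0,1}` so that `Q t + b t + b (t - 1) ≠ 2` (one of the two
choices works), and put `a t = 1 - Q t - b t - b (t - 1)`, which is then a bit. The equations hold
at every `w ≠ 0` by telescoping, and at `w = 0` because both sides sum to `0` over `ZMod n`.
-/

/-- Net flow (indegree minus outdegree, in `ZMod 3`) at the vertex `x` of the
multigraph `ends : E → V × V` under the orientation `o` (edge `e` goes from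
`(ends e).1` to `(ends e).2` when `o e = true`, and oppositely otherwise). -/
def mnet {V E : Type} [DecidableEq V] [Fintype E]
    (ends : E → V × V) (o : E → Bool) (x : V) : ZMod 3 :=
  ∑ e : E,
    ((if (if o e then (ends e).2 else (ends e).1) = x then (1 : ZMod 3) else 0)
      - (if (if o e then (ends e).1 else (ends e).2) = x then (1 : ZMod 3) else 0))

/-- The circulant graph `B_i` as a multigraph: the edge `(j, false)` joins
`v_j` to `v_{j+1}` and the edge `(j, true)` joins `v_j` to `v_{j+(i-1)/2}`. -/
def BcircEnds (i : ℕ) : ZMod i × Bool → ZMod i × ZMod i := fun e =>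
  if e.2 then (e.1, e.1 + (((i - 1) / 2 : ℕ) : ZMod i)) else (e.1, e.1 + 1)

def edgeSign (b : Bool) : ZMod 3 := if b then 1 else -1

lemma mnet_eq_sum_edgeSign {V E : Type} [DecidableEq V] [Fintype E]
    (ends : E → V × V) (o : E → Bool) (x : V) :
    mnet ends o x = ∑ e : E, edgeSign (o e) *
      ((if (ends e).2 = x then 1 else 0) - (if (ends e).1 = x then 1 else 0)) := by
  refine Finset.sum_congr rfl fun e _ => ?_
  cases o e <;> simp only [edgeSign, Bool.false_eq_true, if_false, if_true] <;> ring

lemma mnet_circulant {G L : Type} [AddCommGroup G] [Fintype G] [DecidableEq G] [Fintype L]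
    (c : L → G) {ends : G × L → G × G} (hends : ∀ e, ends e = (e.1, e.1 + c e.2))
    (o : G × L → Bool) (x : G) :
    mnet ends o x = ∑ l : L, (edgeSign (o (x - c l, l)) - edgeSign (o (x, l))) := by
  rw [mnet_eq_sum_edgeSign, Fintype.sum_prod_type_right]
  refine Finset.sum_congr rfl fun l _ => ?_
  simp only [hends, mul_sub, mul_ite, mul_one, mul_zero, Finset.sum_sub_distrib,
    ← eq_sub_iff_add_eq, Finset.sum_ite_eq', Finset.mem_univ, if_true]

lemma mnet_BcircEnds (i : ℕ) [NeZero i] (o : ZMod i × Bool → Bool) (v : ZMod i) :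
    mnet (BcircEnds i) o v =
      edgeSign (o (v - 1, false)) - edgeSign (o (v, false)) +
        (edgeSign (o (v - (((i - 1) / 2 : ℕ) : ZMod i), true)) - edgeSign (o (v, true))) := by
  rw [mnet_circulant (fun l : Bool => if l then (((i - 1) / 2 : ℕ) : ZMod i) else 1)
    (fun ⟨_, l⟩ => by cases l <;> rfl), Fintype.sum_bool]
  simp only [if_true, Bool.false_eq_true, if_false]
  ring

lemma edgeSign_decide_eq_zero {x : ZMod 3} (hx : x = 0 ∨ x = 1) :
    edgeSign (decide (x = 0)) = 1 + x := by
  rcases hx with rfl | rfl <;> decide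

lemma edgeSign_decide_eq_one {x : ZMod 3} (hx : x = 0 ∨ x = 1) :
    edgeSign (decide (x = 1)) = -1 - x := by
  rcases hx with rfl | rfl <;> decide

section Greedy

variable (r : ℕ → ZMod 3)

def partialSum (t : ℕ) : ZMod 3 := ∑ m ∈ Finset.range t, r (m + 1)

def greedyBit : ℕ → ZMod 3
  | 0 => 0
  | t + 1 => if greedyBit t + partialSum r (t + 1) = 2 then 1 else 0

def companionBit (n : ℕ) : ℕ → ZMod 3
  | 0 => 1 - greedyBit r (n - 1)
  | t + 1 => 1 - partialSum r (t + 1) - greedyBit r (t + 1) - greedyBit r t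

lemma greedyBit_mem (t : ℕ) : greedyBit r t = 0 ∨ greedyBit r t = 1 := by
  cases t with
  | zero => exact Or.inl rfl
  | succ t =>
    unfold greedyBit
    split_ifs
    exacts [Or.inr rfl, Or.inl rfl]

lemma partialSum_add_greedyBit_ne_two (t : ℕ) :
    partialSum r (t + 1) + greedyBit r (t + 1) + greedyBit r t ≠ 2 := by
  rw [greedyBit]
  generalize partialSum r (t + 1) = s
  generalize greedyBit r t = b
  revert s b
  decide

lemma companionBit_mem (n t : ℕ) : companionBit r n t = 0 ∨ companionBit r n t = 1 := by
  cases t with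
  | zero => rcases greedyBit_mem r (n - 1) with h | h <;> simp [companionBit, h]
  | succ t =>
    have key : ∀ x : ZMod 3, x ≠ 2 → 1 - x = 0 ∨ 1 - x = 1 := by decide
    rw [companionBit, sub_sub, sub_sub, ← add_assoc]
    exact key _ (partialSum_add_greedyBit_ne_two r t)

lemma companionBit_sub_add_greedyBit_sub_of_two_le (n t : ℕ) :
    (companionBit r n (t + 1) - companionBit r n (t + 2)) + (greedyBit r t - greedyBit r (t + 2))
      = r (t + 2) := by
  simp only [companionBit, partialSum, Finset.sum_range_succ]
  ring

lemma companionBit_sub_add_greedyBit_sub_one (n : ℕ) :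
    (companionBit r n 0 - companionBit r n 1) + (greedyBit r (n - 1) - greedyBit r 1) = r 1 := by
  rw [companionBit, companionBit, partialSum, Finset.sum_range_one, show greedyBit r 0 = 0 from rfl]
  ring

end Greedy

lemma sum_comp_sub_sub_eq_zero {G M : Type} [AddCommGroup G] [Fintype G] [AddCommGroup M]
    (f : G → M) (c : G) : ∑ x, (f (x - c) - f x) = 0 := by
  rw [Finset.sum_sub_distrib]
  exact sub_eq_zero.2 ((Equiv.subRight c).sum_comp f)

lemma eq_of_sum_eq_of_forall_ne {ι M : Type} [Fintype ι] [AddCommGroup M] {f g : ι → M}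
    (h : ∑ x, f x = ∑ x, g x) {x₀ : ι} (hne : ∀ x ≠ x₀, f x = g x) : f x₀ = g x₀ := by
  rw [← sub_eq_zero, ← Finset.sum_sub_distrib,
    Finset.sum_eq_single x₀ (fun x _ hx => sub_eq_zero.2 (hne x hx)) (by simp)] at h
  exact sub_eq_zero.1 h

theorem exists_bits_of_sum_eq_zero (n : ℕ) [NeZero n] (q : ZMod n → ZMod 3)
    (hq : ∑ w, q w = 0) :
    ∃ a b : ZMod n → ZMod 3, (∀ w, a w = 0 ∨ a w = 1) ∧ (∀ w, b w = 0 ∨ b w = 1) ∧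
      ∀ w, (a (w - 1) - a w) + (b (w - 2) - b w) = q w := by
  set r : ℕ → ZMod 3 := fun t => q t
  set a : ZMod n → ZMod 3 := fun w => companionBit r n w.val
  set b : ZMod n → ZMod 3 := fun w => greedyBit r w.val
  have ha : ∀ t < n, a t = companionBit r n t := fun t ht => by simp [a, ZMod.val_natCast_of_lt ht]
  have hb : ∀ t < n, b t = greedyBit r t := fun t ht => by simp [b, ZMod.val_natCast_of_lt ht]
  have hne : ∀ w ≠ 0, (a (w - 1) - a w) + (b (w - 2) - b w) = q w := by
    intro w hw
    obtain ⟨t, ht, rfl⟩ : ∃ t < n, (t : ZMod n) = w := ⟨w.val, w.val_lt, w.natCast_zmod_val⟩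
    match t, hw with
    | 0, hw => exact absurd Nat.cast_zero hw
    | 1, _ =>
      have h0 : ((1 : ℕ) : ZMod n) - 1 = ((0 : ℕ) : ZMod n) := by simp
      have h1 : ((1 : ℕ) : ZMod n) - 2 = ((n - 1 : ℕ) : ZMod n) := by
        rw [Nat.cast_sub NeZero.one_le, ZMod.natCast_self]; ring
      rw [h0, h1, ha 0 (by omega), ha 1 ht, hb _ (by omega), hb 1 ht]
      exact companionBit_sub_add_greedyBit_sub_one r n
    | s + 2, _ =>
      have h1 : ((s + 2 : ℕ) : ZMod n) - 1 = ((s + 1 : ℕ) : ZMod n) := by push_cast; ring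
      have h2 : ((s + 2 : ℕ) : ZMod n) - 2 = ((s : ℕ) : ZMod n) := by push_cast; ring
      rw [h1, h2, ha _ (by omega), ha _ ht, hb _ (by omega), hb _ ht]
      exact companionBit_sub_add_greedyBit_sub_of_two_le r n s
  refine ⟨a, b, fun w => companionBit_mem r n w.val, fun w => greedyBit_mem r w.val, fun w => ?_⟩
  rcases eq_or_ne w 0 with rfl | hw
  · refine eq_of_sum_eq_of_forall_ne ?_ hne
    rw [hq, Finset.sum_add_distrib, sum_comp_sub_sub_eq_zero, sum_comp_sub_sub_eq_zero, add_zero]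
  · exact hne w hw

lemma two_mul_natCast_half_pred {n : ℕ} (hodd : Odd n) :
    (2 : ZMod n) * (((n - 1) / 2 : ℕ) : ZMod n) = -1 := by
  obtain ⟨m, rfl⟩ := hodd
  rw [show (2 * m + 1 - 1) / 2 = m by omega, eq_neg_iff_add_eq_zero]
  exact_mod_cast ZMod.natCast_self (2 * m + 1)

theorem stmt_3_general (i : ℕ) [NeZero i] (hodd : Odd i)
    (p : ZMod i → ZMod 3) (hp : ∑ v : ZMod i, p v = 0) :
    ∃ o : ZMod i × Bool → Bool, ∀ v : ZMod i, mnet (BcircEnds i) o v = p v := by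
  set K : ZMod i := (((i - 1) / 2 : ℕ) : ZMod i)
  have h2K : 2 * K = -1 := two_mul_natCast_half_pred hodd
  let u : (ZMod i)ˣ := ZMod.unitOfCoprime 2 (Nat.coprime_two_left.2 hodd)
  have hu : (u : ZMod i) = 2 := by simp [u]
  obtain ⟨a, b, ha, hb, hab⟩ := exists_bits_of_sum_eq_zero i (fun w => p (↑u⁻¹ * w))
    ((Equiv.sum_comp (Units.mulLeft u⁻¹) p).trans hp)
  refine ⟨fun e => if e.2 then decide (a (2 * e.1 - 1) = 1) else decide (b (2 * e.1) = 0),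
    fun v => ?_⟩
  rw [mnet_BcircEnds]
  simp only [if_true, Bool.false_eq_true, if_false, edgeSign_decide_eq_zero (hb _),
    edgeSign_decide_eq_one (ha _)]
  have h1 : 2 * (v - 1) = 2 * v - 2 := by ring
  have h2 : 2 * (v - K) - 1 = 2 * v := by linear_combination -h2K
  have hv : ↑u⁻¹ * (2 * v) = v := by rw [← hu, Units.inv_mul_cancel_left]
  have hcycle := hab (2 * v)
  rw [hv] at hcycle
  rw [h1, h2]
  linear_combination hcycle

/-- For every odd `i ≥ 5` and every prescription `p : V(B_i) → ZMod 3` summing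
to `0`, the circulant graph `B_i` (jumps `1` and `(i-1)/2`) has an orientation
with `indegree(v) - outdegree(v) ≡ p(v) (mod 3)` at every vertex `v`. -/
theorem stmt_3 (i : ℕ) [NeZero i] (h5 : 5 ≤ i) (hodd : Odd i)
    (p : ZMod i → ZMod 3) (hp : ∑ v : ZMod i, p v = 0) :
    ∃ o : ZMod i × Bool → Bool, ∀ v : ZMod i, mnet (BcircEnds i) o v = p v :=
  stmt_3_general i hodd p hp
end

section
/- For every odd integer i ≥ 5 and every valid prescription function p, the graph A_i, obtained from the circulant graph B_i by subdividing the edge v_1v_i with a new vertex v_0 and adding the edge v_0 v_{(i+1)/2}, admits an orientation such that indegree(v) − outdegree(v) ≡ p(v) (mod 3) for every vertex v. -/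
/-- The graph `A_i`, obtained from the circulant graph `B_i` (jumps `1` and
`(i-1)/2`, vertices `v_1, …, v_i` identified with `ZMod i` via `v_t ↦ t`, so
`v_i ↦ 0`) by subdividing the edge `v_1 v_i` with a new vertex `v_0 = none` and
adding the edge `v_0 v_{(i+1)/2}`.  Edges: all edges of `B_i` except the edge
`(0, false)` (which is `v_i v_1`), plus three new edges `v_0 v_1`, `v_0 v_i`,
`v_0 v_{(i+1)/2}`. -/
def AcircEnds (i : ℕ) :
    ({e : ZMod i × Bool // e ≠ ((0 : ZMod i), false)} ⊕ Fin 3) →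
      Option (ZMod i) × Option (ZMod i) := fun e =>
  match e with
  | Sum.inl ee =>
      if ee.1.2 then (some ee.1.1, some (ee.1.1 + (((i - 1) / 2 : ℕ) : ZMod i)))
      else (some ee.1.1, some (ee.1.1 + 1))
  | Sum.inr r =>
      if r = 0 then (none, some 1)
      else if r = 1 then (none, some 0)
      else (none, some (((i + 1) / 2 : ℕ) : ZMod i))

/-!
A nowhere-zero `ZMod 3`-valued function on the edges is an orientation (value `1`: keep the
direction of the edge, value `2`: reverse it), and its net flow is the net in-degree. Such flows
with any zero-sum boundary extend along a vertex order in which every vertex after the first has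
two edges back to earlier vertices: the values on these two edges can be chosen to give any sum,
which fixes the boundary at the new vertex, and what is left is a zero-sum problem on the
earlier vertices.

Write `k = (i - 1) / 2`. Since `-2 * k = 1` in `ZMod i`, the vertices `0, k, 2k, …` of `B_i`
form the cycle whose square is `B_i`. Lifting the path `k, k + 1, 0` of `A_i` to an edge `k, 0`
doubles the edge between the first two of them, and then `0, k, 2k, …, (i - 1)k, v₀` is such an
order. A flow on the lifted graph gives one on `A_i` by sending the value of the lifted edge
along the path.
-/

open Finset Function

section Z3Flow

variable {V E : Type*} {ends : E → V × V}

variable (ends) in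
def Joins (e : E) (v : V) (S : Finset V) : Prop :=
  (ends e).1 = v ∧ (ends e).2 ∈ S ∨ (ends e).2 = v ∧ (ends e).1 ∈ S

lemma Joins.of_eq_out {e : E} {v w : V} {S : Finset V} (h : ends e = (v, w)) (hw : w ∈ S) :
    Joins ends e v S :=
  Or.inl ⟨by rw [h], by rw [h]; exact hw⟩

lemma Joins.of_eq_in {e : E} {v w : V} {S : Finset V} (h : ends e = (w, v)) (hw : w ∈ S) :
    Joins ends e v S :=
  Or.inr ⟨by rw [h], by rw [h]; exact hw⟩

lemma Joins.not_mem {e : E} {v : V} {S : Finset V} (h : Joins ends e v S) (hv : v ∉ S) :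
    ¬((ends e).1 ∈ S ∧ (ends e).2 ∈ S) := by
  rcases h with ⟨h₁, -⟩ | ⟨h₁, -⟩ <;> simp [h₁, hv]

variable (ends) in
/-- The lift of the path `e₁ e₂` through the vertex `(ends e₁).2 = (ends e₂).1`: `e₁` becomes the
edge from the start of `e₁` to the end of `e₂`, and `e₂` a loop, which carries no flow. -/
def liftEnds [DecidableEq E] (e₁ e₂ : E) : E → V × V :=
  update (update ends e₁ ((ends e₁).1, (ends e₂).2)) e₂ ((ends e₂).1, (ends e₂).1)

lemma liftEnds_apply_of_ne [DecidableEq E] {e₁ e₂ e : E} (h₁ : e ≠ e₁) (h₂ : e ≠ e₂) :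
    liftEnds ends e₁ e₂ e = ends e := by
  simp [liftEnds, h₁, h₂]

lemma liftEnds_apply_left [DecidableEq E] {e₁ e₂ : E} (h : e₁ ≠ e₂) :
    liftEnds ends e₁ e₂ e₁ = ((ends e₁).1, (ends e₂).2) := by
  simp [liftEnds, h]

variable [DecidableEq V]

lemma Joins.mem_insert {e : E} {v : V} {S : Finset V} (h : Joins ends e v S) :
    (ends e).1 ∈ insert v S ∧ (ends e).2 ∈ insert v S := by
  rcases h with ⟨h₁, h₂⟩ | ⟨h₁, h₂⟩ <;> simp [h₁, h₂]

variable (ends) in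
def incidence (e : E) (v : V) : ZMod 3 :=
  (if (ends e).2 = v then 1 else 0) - (if (ends e).1 = v then 1 else 0)

lemma incidence_eq_zero_of_fst_eq_snd {e : E} (h : (ends e).1 = (ends e).2) (v : V) :
    incidence ends e v = 0 := by
  simp [incidence, h]

lemma incidence_eq_zero_of_ne {e : E} {v : V} (h₁ : (ends e).1 ≠ v) (h₂ : (ends e).2 ≠ v) :
    incidence ends e v = 0 := by
  simp [incidence, h₁, h₂]

lemma Joins.incidence_ne_zero {e : E} {v : V} {S : Finset V} (h : Joins ends e v S) (hv : v ∉ S) :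
    incidence ends e v ≠ 0 := by
  rcases h with ⟨h₁, h₂⟩ | ⟨h₁, h₂⟩ <;> simp [incidence, h₁, ne_of_mem_of_not_mem h₂ hv]

variable [Fintype E]

variable (ends) in
def netFlow (F : E → ZMod 3) (v : V) : ZMod 3 :=
  ∑ e, incidence ends e v * F e

lemma netFlow_add (F G : E → ZMod 3) :
    netFlow ends (F + G) = netFlow ends F + netFlow ends G := by
  ext v
  simp only [netFlow, Pi.add_apply, mul_add, sum_add_distrib]

lemma netFlow_single [DecidableEq E] (e : E) (x : ZMod 3) (v : V) :
    netFlow ends (Pi.single e x) v = incidence ends e v * x := by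
  simp [netFlow, Pi.single_apply]

lemma netFlow_eq_zero_of_ne {F : E → ZMod 3} {v : V}
    (h : ∀ e, F e ≠ 0 → (ends e).1 ≠ v ∧ (ends e).2 ≠ v) : netFlow ends F v = 0 := by
  refine sum_eq_zero fun e _ => ?_
  by_cases he : F e = 0
  · rw [he, mul_zero]
  · rw [incidence_eq_zero_of_ne (h e he).1 (h e he).2, zero_mul]

lemma exists_mul_add_mul_eq_zmod3 {a b : ZMod 3} (ha : a ≠ 0) (hb : b ≠ 0) (t : ZMod 3) :
    ∃ x y : ZMod 3, x ≠ -1 ∧ y ≠ -1 ∧ a * x + b * y = t := by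
  revert a b t; decide

lemma exists_netFlow_eq_of_joins {S : Finset V} {v : V} {e₁ e₂ : E}
    (hv : v ∉ S) (he : e₁ ≠ e₂) (h₁ : Joins ends e₁ v S) (h₂ : Joins ends e₂ v S) (t : ZMod 3) :
    ∃ g : E → ZMod 3, (∀ e, g e ≠ 0 ↔ ((ends e).1 ∈ insert v S ∧ (ends e).2 ∈ insert v S) ∧
      ¬((ends e).1 ∈ S ∧ (ends e).2 ∈ S)) ∧ netFlow ends g v = t := by
  classical
  let IsNew (e : E) : Prop := ((ends e).1 ∈ insert v S ∧ (ends e).2 ∈ insert v S) ∧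
    ¬((ends e).1 ∈ S ∧ (ends e).2 ∈ S)
  let g₀ (e : E) : ZMod 3 := if IsNew e then 1 else 0
  have hnew₁ : IsNew e₁ := ⟨h₁.mem_insert, h₁.not_mem hv⟩
  have hnew₂ : IsNew e₂ := ⟨h₂.mem_insert, h₂.not_mem hv⟩
  -- raising the values on `e₁`, `e₂` from `1` to `1 + x`, `1 + y` keeps them nonzero
  obtain ⟨x, y, hx, hy, hxy⟩ := exists_mul_add_mul_eq_zmod3 (h₁.incidence_ne_zero hv)
    (h₂.incidence_ne_zero hv) (t - netFlow ends g₀ v)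
  let g := g₀ + Pi.single e₁ x + Pi.single e₂ y
  refine ⟨g, fun e => show g e ≠ 0 ↔ IsNew e from ?_, ?_⟩
  · by_cases h1 : e = e₁
    · subst h1
      rw [show g e = 1 + x by simp [g, g₀, hnew₁, he], iff_true_intro hnew₁, iff_true]
      exact fun h => hx (eq_neg_of_add_eq_zero_right h)
    by_cases h2 : e = e₂
    · subst h2
      rw [show g e = 1 + y by simp [g, g₀, hnew₂, h1], iff_true_intro hnew₂, iff_true]
      exact fun h => hy (eq_neg_of_add_eq_zero_right h)
    simp [g, g₀, h1, h2]
  · simp only [g, netFlow_add, Pi.add_apply, netFlow_single]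
    linear_combination hxy

variable [Fintype V]

lemma sum_netFlow (F : E → ZMod 3) : ∑ v, netFlow ends F v = 0 := by
  simp only [netFlow, incidence]
  rw [sum_comm]
  refine sum_eq_zero fun e _ => ?_
  simp [← sum_mul, sum_sub_distrib]

variable (ends) in
def IsZ3Connected : Prop :=
  ∀ p : V → ZMod 3, ∑ v, p v = 0 → ∃ F : E → ZMod 3, (∀ e, F e ≠ 0) ∧ netFlow ends F = p

variable (ends) in
/-- `Z₃`-connectivity of the subgraph induced by `S`, with flows vanishing off its edges. -/
def IsZ3ConnectedOn (S : Finset V) : Prop :=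
  ∀ p : V → ZMod 3, (∀ v ∉ S, p v = 0) → ∑ v, p v = 0 →
    ∃ F : E → ZMod 3, (∀ e, F e ≠ 0 ↔ (ends e).1 ∈ S ∧ (ends e).2 ∈ S) ∧ netFlow ends F = p

lemma IsZ3ConnectedOn.isZ3Connected (h : IsZ3ConnectedOn ends univ) : IsZ3Connected ends := by
  intro p hp
  obtain ⟨F, hF, hFp⟩ := h p (by simp) hp
  exact ⟨F, fun e => (hF e).2 (by simp), hFp⟩

lemma isZ3ConnectedOn_of_subsingleton {S : Finset V} (hS : (S : Set V).Subsingleton) :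
    IsZ3ConnectedOn ends S := by
  intro p hp hsum
  have hp0 : p = 0 := by
    funext v
    by_cases hv : v ∈ S
    · calc p v = ∑ w, p w :=
            (Fintype.sum_eq_single v fun w hw => hp w fun hwS => hw (hS hwS hv)).symm
        _ = 0 := hsum
    · exact hp v hv
  refine ⟨fun e => if (ends e).1 ∈ S ∧ (ends e).2 ∈ S then 1 else 0,
    fun e => by dsimp only; split_ifs <;> simp_all, ?_⟩
  funext v
  refine hp0 ▸ sum_eq_zero fun e _ => ?_
  dsimp only
  split_ifs with h
  · rw [incidence_eq_zero_of_fst_eq_snd (hS h.1 h.2), zero_mul]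
  · rw [mul_zero]

lemma IsZ3ConnectedOn.insert_of_joins {S : Finset V} {v : V} {e₁ e₂ : E}
    (hS : IsZ3ConnectedOn ends S) (hv : v ∉ S) (he : e₁ ≠ e₂)
    (h₁ : Joins ends e₁ v S) (h₂ : Joins ends e₂ v S) : IsZ3ConnectedOn ends (insert v S) := by
  intro p hp hsum
  obtain ⟨g, hg, hgv⟩ := exists_netFlow_eq_of_joins hv he h₁ h₂ (p v)
  have hg_out : ∀ w ∉ insert v S, netFlow ends g w = 0 := fun w hw =>
    netFlow_eq_zero_of_ne fun e he =>
      ⟨ne_of_mem_of_not_mem ((hg e).1 he).1.1 hw, ne_of_mem_of_not_mem ((hg e).1 he).1.2 hw⟩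
  obtain ⟨F, hF, hFp⟩ := hS (p - netFlow ends g) (by
      intro w hw
      by_cases hwv : w = v
      · simp [hwv, hgv]
      · simp [hp w (by simp [hwv, hw]), hg_out w (by simp [hwv, hw])])
    (by simp [sum_sub_distrib, hsum, sum_netFlow])
  refine ⟨F + g, fun e => ?_, by rw [netFlow_add, hFp, sub_add_cancel]⟩
  by_cases hin : (ends e).1 ∈ S ∧ (ends e).2 ∈ S
  · have hge : g e = 0 := not_not.1 fun h => ((hg e).1 h).2 hin
    simp [hge, (hF e).2 hin, mem_insert_of_mem hin.1, mem_insert_of_mem hin.2]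
  · have hFe : F e = 0 := not_not.1 fun h => hin ((hF e).1 h)
    simp only [Pi.add_apply, hFe, zero_add, hg]
    exact and_iff_left hin

variable (ends) in
def HasTwoLowerEdges (rank : V → ℕ) (v : V) : Prop :=
  ∃ e₁ e₂, e₁ ≠ e₂ ∧ Joins ends e₁ v {w | rank w < rank v} ∧ Joins ends e₂ v {w | rank w < rank v}

lemma filter_rank_lt_add_one {rank : V → ℕ} (hrank : Injective rank) (v : V) :
    filter (rank · < rank v + 1) univ = insert v (filter (rank · < rank v) univ) := by
  ext w
  simp only [mem_filter, mem_univ, true_and, mem_insert]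
  constructor
  · intro hw
    rcases Nat.lt_succ_iff_lt_or_eq.1 hw with hw | hw
    exacts [Or.inr hw, Or.inl (hrank hw)]
  · rintro (rfl | hw) <;> omega

theorem isZ3Connected_of_rank (rank : V → ℕ) (hrank : Injective rank)
    (hlower : ∀ v, 0 < rank v → HasTwoLowerEdges ends rank v) : IsZ3Connected ends := by
  have key : ∀ N, 1 ≤ N → IsZ3ConnectedOn ends {w | rank w < N} := by
    intro N hN
    induction N, hN using Nat.le_induction with
    | base =>
      refine isZ3ConnectedOn_of_subsingleton fun a ha b hb => hrank ?_
      simp only [coe_filter, mem_univ, true_and, Set.mem_ofPred_eq] at ha hb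
      omega
    | succ N hN ih =>
      by_cases hv : ∃ v, rank v = N
      · obtain ⟨v, rfl⟩ := hv
        obtain ⟨e₁, e₂, he, h₁, h₂⟩ := hlower v (by omega)
        rw [filter_rank_lt_add_one hrank]
        exact ih.insert_of_joins (by simp) he h₁ h₂
      · have hS : filter (rank · < N + 1) univ = filter (rank · < N) univ := by
          ext w
          simp only [mem_filter, mem_univ, true_and]
          have : rank w ≠ N := fun h => hv ⟨w, h⟩
          omega
        rwa [hS]
  have huniv : filter (rank · < univ.sup rank + 1) univ = univ := by
    ext w
    simpa using Nat.lt_succ_of_le (le_sup (mem_univ w))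
  exact (huniv ▸ key _ (by omega)).isZ3Connected

lemma IsZ3Connected.of_liftEnds [DecidableEq E] {e₁ e₂ : E} (he : e₁ ≠ e₂)
    (hpath : (ends e₁).2 = (ends e₂).1) (h : IsZ3Connected (liftEnds ends e₁ e₂)) :
    IsZ3Connected ends := by
  intro p hp
  obtain ⟨F, hF, hFp⟩ := h p hp
  refine ⟨update F e₂ (F e₁), fun e => ?_, ?_⟩
  · by_cases h : e = e₂
    · subst h; simpa using hF e₁
    · simpa [h] using hF e
  · rw [← hFp]
    funext v
    rw [← sub_eq_zero, netFlow, netFlow, ← sum_sub_distrib, Fintype.sum_eq_add e₁ e₂ he]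
    · simp only [incidence, liftEnds, update_self, update_of_ne he, hpath]
      ring
    · rintro e ⟨h1, h2⟩
      simp [incidence, liftEnds, update_of_ne h1, update_of_ne h2]

end Z3Flow

lemma mnet_eq_netFlow {V E : Type} [DecidableEq V] [Fintype E] (ends : E → V × V)
    {F : E → ZMod 3} (hF : ∀ e, F e ≠ 0) (v : V) :
    mnet ends (fun e => decide (F e = 1)) v = netFlow ends F v := by
  refine sum_congr rfl fun e _ => ?_
  obtain h | h : F e = 1 ∨ F e = 2 := by
    have := hF e
    revert this
    generalize F e = a
    revert a
    decide
  · simp [h, incidence]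
  · simp only [h, incidence, show decide ((2 : ZMod 3) = 1) = false from rfl, Bool.false_eq_true,
      if_false]
    split_ifs <;> decide

lemma ZMod.val_sub_one_of_ne_zero {n : ℕ} [Fact (1 < n)] {x : ZMod n} (hx : x ≠ 0) :
    (x - 1).val = x.val - 1 := by
  rw [ZMod.val_sub, ZMod.val_one]
  rw [ZMod.val_one, Nat.one_le_iff_ne_zero, Ne, ZMod.val_eq_zero]
  exact hx

/-- The vertex `m * k` of `B_i` (`k = (i - 1) / 2`) has rank `m < i`, because `-2 * k = 1`;
`v₀ = none` comes last. -/
def acircRank (i : ℕ) : Option (ZMod i) → ℕ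
  | none => i
  | some u => (-2 * u).val

section Acirc

variable {i : ℕ}

lemma two_mul_half_add_one (hodd : Odd i) : (2 : ZMod i) * ((i - 1) / 2 : ℕ) + 1 = 0 := by
  have h : 2 * ((i - 1) / 2) + 1 = i := by have := Nat.odd_iff.1 hodd; omega
  exact_mod_cast (congrArg (Nat.cast : ℕ → ZMod i) h).trans (ZMod.natCast_self i)

lemma acircEnds_inl_true (u : ZMod i) (h : (u, true) ≠ (0, false)) :
    AcircEnds i (.inl ⟨(u, true), h⟩) = (some u, some (u + (((i - 1) / 2 : ℕ) : ZMod i))) := rfl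

lemma acircEnds_inl_false (u : ZMod i) (h : (u, false) ≠ (0, false)) :
    AcircEnds i (.inl ⟨(u, false), h⟩) = (some u, some (u + 1)) := rfl

lemma acircEnds_inr_zero : AcircEnds i (.inr 0) = (none, some 1) := rfl

lemma acircEnds_inr_one : AcircEnds i (.inr 1) = (none, some 0) := rfl

/-- `A_i` with the path `k, k + 1, 0` lifted to an edge `k, 0`, where `k = (i - 1) / 2`. -/
def acircLiftEnds (i : ℕ) (hk : ((((i - 1) / 2 : ℕ) : ZMod i), false) ≠ (0, false)) :
    ({e : ZMod i × Bool // e ≠ ((0 : ZMod i), false)} ⊕ Fin 3) →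
      Option (ZMod i) × Option (ZMod i) :=
  liftEnds (AcircEnds i) (.inl ⟨_, hk⟩) (.inl ⟨((((i - 1) / 2 : ℕ) : ZMod i) + 1, true), by simp⟩)

lemma acircLiftEnds_of_ne {hk : ((((i - 1) / 2 : ℕ) : ZMod i), false) ≠ (0, false)}
    {a : {e : ZMod i × Bool // e ≠ ((0 : ZMod i), false)} ⊕ Fin 3} (h₁ : a ≠ .inl ⟨_, hk⟩)
    (h₂ : a ≠ .inl ⟨((((i - 1) / 2 : ℕ) : ZMod i) + 1, true), by simp⟩) :
    acircLiftEnds i hk a = AcircEnds i a :=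
  liftEnds_apply_of_ne h₁ h₂

variable [NeZero i]

lemma acircRank_injective (hodd : Odd i) : Injective (acircRank i) := by
  have hK := two_mul_half_add_one hodd
  have hval := ZMod.val_lt (n := i)
  rintro (_ | u) (_ | w) h <;> simp only [acircRank] at h
  · rfl
  · exact absurd h (hval _).ne'
  · exact absurd h (hval _).ne
  · have h' := congrArg ((((i - 1) / 2 : ℕ) : ZMod i) * ·) (ZMod.val_injective i h)
    congr 1
    linear_combination h' + (u - w) * hK

lemma mem_filter_acircRank_lt {u : ZMod i} {w : Option (ZMod i)} (h : acircRank i w < (-2 * u).val) :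
    w ∈ ({w | acircRank i w < acircRank i (some u)} : Finset _) := by
  simpa [acircRank] using h

lemma hasTwoLowerEdges_acircLiftEnds_none
    (hk : ((((i - 1) / 2 : ℕ) : ZMod i), false) ≠ (0, false)) :
    HasTwoLowerEdges (acircLiftEnds i hk) (acircRank i) none := by
  refine ⟨.inr 0, .inr 1, by simp, .of_eq_out (w := some 1) ?_ ?_, .of_eq_out (w := some 0) ?_ ?_⟩
  · exact (acircLiftEnds_of_ne (by simp) (by simp)).trans acircEnds_inr_zero
  · simp [acircRank, ZMod.val_lt]
  · exact (acircLiftEnds_of_ne (by simp) (by simp)).trans acircEnds_inr_one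
  · simp [acircRank, NeZero.pos i]

lemma hasTwoLowerEdges_acircLiftEnds_of_val_eq_one (hodd : Odd i)
    (hk : ((((i - 1) / 2 : ℕ) : ZMod i), false) ≠ (0, false)) {u : ZMod i}
    (hu : (-2 * u).val = 1) : HasTwoLowerEdges (acircLiftEnds i hk) (acircRank i) (some u) := by
  have : Fact (1 < i) := ⟨hu ▸ ZMod.val_lt _⟩
  set K : ZMod i := (((i - 1) / 2 : ℕ) : ZMod i)
  have hK : 2 * K + 1 = 0 := two_mul_half_add_one hodd
  have hK1 : K + 1 ≠ 0 := fun h => hk (by rw [show K = 0 by linear_combination hK - h])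
  obtain rfl : u = K := by
    have : -2 * u = 1 := ZMod.val_injective i (hu.trans (ZMod.val_one i).symm)
    linear_combination K * this + u * hK
  refine ⟨.inl ⟨(0, true), by simp⟩, .inl ⟨_, hk⟩, by simp,
    .of_eq_in (w := some 0) ?_ (mem_filter_acircRank_lt ?_), .of_eq_out (w := some 0) ?_ (mem_filter_acircRank_lt ?_)⟩
  · rw [acircLiftEnds_of_ne (by simp) (by simpa using hK1.symm), acircEnds_inl_true, zero_add]
  · rw [hu]; simp [acircRank]
  · refine (liftEnds_apply_left (by simp)).trans ?_
    show (some K, some (K + 1 + K)) = (some K, some 0)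
    rw [show K + 1 + K = 0 by linear_combination hK]
  · rw [hu]; simp [acircRank]

lemma hasTwoLowerEdges_acircLiftEnds_of_two_le_val (hodd : Odd i)
    (hk : ((((i - 1) / 2 : ℕ) : ZMod i), false) ≠ (0, false)) {u : ZMod i}
    (hu : 2 ≤ (-2 * u).val) : HasTwoLowerEdges (acircLiftEnds i hk) (acircRank i) (some u) := by
  have : Fact (1 < i) := ⟨by have := ZMod.val_lt (-2 * u); omega⟩
  set K : ZMod i := (((i - 1) / 2 : ℕ) : ZMod i)
  have hK : 2 * K + 1 = 0 := two_mul_half_add_one hodd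
  have hx : -2 * u ≠ 0 := fun h => by simp [h] at hu
  have hu0 : u ≠ 0 := fun h => hx (by rw [h, mul_zero])
  have huK : u ≠ K := fun h => by
    rw [h, show -2 * K = 1 by linear_combination -hK, ZMod.val_one] at hu
    omega
  have hx1 : -2 * u - 1 ≠ 0 := fun h => by
    have := congrArg ZMod.val h
    rw [ZMod.val_sub_one_of_ne_zero hx, ZMod.val_zero] at this
    omega
  refine ⟨.inl ⟨(u - K, true), by simp⟩, .inl ⟨(u, false), by simpa using hu0⟩, by simp,
    .of_eq_in (w := some (u - K)) ?_ (mem_filter_acircRank_lt ?_),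
    .of_eq_out (w := some (u + 1)) ?_ (mem_filter_acircRank_lt ?_)⟩
  · rw [acircLiftEnds_of_ne (by simp) (by simpa using fun h => hu0 (by linear_combination h + hK)),
      acircEnds_inl_true, sub_add_cancel]
  · simp only [acircRank]
    rw [show -2 * (u - K) = -2 * u - 1 by linear_combination hK, ZMod.val_sub_one_of_ne_zero hx]
    omega
  · rw [acircLiftEnds_of_ne (by simpa using huK) (by simp), acircEnds_inl_false]
  · simp only [acircRank]
    rw [show -2 * (u + 1) = -2 * u - 1 - 1 by ring, ZMod.val_sub_one_of_ne_zero hx1,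
      ZMod.val_sub_one_of_ne_zero hx]
    omega

theorem isZ3Connected_acircEnds (h3 : 3 ≤ i) (hodd : Odd i) : IsZ3Connected (AcircEnds i) := by
  have hk : ((((i - 1) / 2 : ℕ) : ZMod i), false) ≠ (0, false) := by
    rw [Ne, Prod.mk.injEq, ZMod.natCast_eq_zero_iff]
    exact fun h => Nat.not_dvd_of_pos_of_lt (by omega) (by omega) h.1
  refine IsZ3Connected.of_liftEnds (e₁ := .inl ⟨_, hk⟩)
    (e₂ := .inl ⟨((((i - 1) / 2 : ℕ) : ZMod i) + 1, true), by simp⟩) (by simp) rfl ?_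
  refine isZ3Connected_of_rank (ends := acircLiftEnds i hk) (acircRank i)
    (acircRank_injective hodd) ?_
  rintro (_ | u) hu
  · exact hasTwoLowerEdges_acircLiftEnds_none hk
  · rcases (show (-2 * u).val = 1 ∨ 2 ≤ (-2 * u).val by simp only [acircRank] at hu; omega)
      with hu | hu
    · exact hasTwoLowerEdges_acircLiftEnds_of_val_eq_one hodd hk hu
    · exact hasTwoLowerEdges_acircLiftEnds_of_two_le_val hodd hk hu

end Acirc

/-- For every odd `i ≥ 5` and every valid prescription `p` (summing to `0` in
`ZMod 3`), the graph `A_i` has an orientation with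
`indegree(v) - outdegree(v) ≡ p(v) (mod 3)` at every vertex. -/
theorem stmt_4 (i : ℕ) [NeZero i] (h5 : 5 ≤ i) (hodd : Odd i)
    (p : Option (ZMod i) → ZMod 3) (hp : ∑ v : Option (ZMod i), p v = 0) :
    ∃ o : ({e : ZMod i × Bool // e ≠ ((0 : ZMod i), false)} ⊕ Fin 3) → Bool,
      ∀ v : Option (ZMod i), mnet (AcircEnds i) o v = p v := by
  obtain ⟨F, hF, hFp⟩ := isZ3Connected_acircEnds (by omega) hodd p hp
  exact ⟨fun e => decide (F e = 1), fun v => by rw [mnet_eq_netFlow _ hF, hFp]⟩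
end

section
/- There exists a 4-regular-plus graph G (drawn in the plane as in the construction below), a vertex d of degree 4 with a fixed orientation of its incident edges, and a valid prescription function p: V(G) → Z_3, such that G has no orientation extending the orientation at d and satisfying indegree(v) − outdegree(v) ≡ p(v) (mod 3) for all v. Concretely: for n = 3k+5 (k ≥ 0), take vertices t, w, u_1,...,u_n, v_1,...,v_n, where the boundary cycle is t u_1 ... u_n w v_n ... v_1 t, plus edges tw, u_1 w, v_1 w, and u_i v_{n-i+1}, u_i v_{n-i+2} for all appropriate i. With d = v_{n-1}, all four edges at d directed out of d, p(d) = −1, p(v_n)=p(v_{n-2})=p(u_2)=p(u_3)=+1, p(u_1)=−1, p(t)=p(w)=0, and p = +1 on all other vertices, G has no valid orientation extending d. -/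
/-- The counterexample graph `G` for parameter `n`: vertices are the natural
numbers `0, …, 2n+1`, coded as `t = 0`, `u_i = i` for `1 ≤ i ≤ n`, `w = n+1`,
`v_i = n+1+i` for `1 ≤ i ≤ n`.  Edges are indexed by `0, …, 4n+3`:
* `0 ≤ e ≤ n` : the path `t u_1 u_2 … u_n w` (edge `e` joins `e` and `e+1`);
* `n+1 ≤ e ≤ 2n+1` : the path `t v_1 v_2 … v_n w`;
* `e = 2n+2` : the edge `t w`;
* `e = 2n+3` : the edge `u_1 w`;
* `e = 2n+4` : the edge `v_1 w`;
* `2n+5 ≤ e ≤ 3n+4` : the edges `u_i v_{n-i+1}` for `1 ≤ i ≤ n`;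
* `3n+5 ≤ e ≤ 4n+3` : the edges `u_i v_{n-i+2}` for `2 ≤ i ≤ n`.
(The boundary cycle is `t u_1 … u_n w v_n … v_1 t`.) -/
def exEnds (n : ℕ) : ℕ → ℕ × ℕ := fun e =>
  if e ≤ n then (e, e + 1)
  else if e ≤ 2 * n + 1 then
    ((if e - (n + 1) = 0 then 0 else n + 1 + (e - (n + 1))),
      (if e - (n + 1) + 1 = n + 1 then n + 1 else n + 1 + (e - (n + 1) + 1)))
  else if e = 2 * n + 2 then (0, n + 1)
  else if e = 2 * n + 3 then (1, n + 1)
  else if e = 2 * n + 4 then (n + 2, n + 1)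
  else if e ≤ 3 * n + 4 then (e - (2 * n + 4), n + 1 + (n - (e - (2 * n + 4)) + 1))
  else (e - (3 * n + 3), n + 1 + (n - (e - (3 * n + 3)) + 2))

/-- The prescription `p`: `p(t) = p(w) = 0`, `p(u_1) = p(v_{n-1}) = -1`, and
`p = +1` on all other vertices (in particular on `v_n, v_{n-2}, u_2, u_3`).
Here `d = v_{n-1} = 2n`. -/
def exP (n : ℕ) : ℕ → ZMod 3 := fun x =>
  if x = 0 ∨ x = n + 1 then 0 else if x = 1 ∨ x = 2 * n then -1 else 1

/-- Net flow (indegree minus outdegree, in `ZMod 3`) at the vertex `x` under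
the orientation `o` (edge `e` is directed from `(exEnds n e).1` to
`(exEnds n e).2` when `o e = true`, oppositely otherwise). -/
def exNet (n : ℕ) (o : ℕ → Bool) (x : ℕ) : ZMod 3 :=
  ∑ e ∈ Finset.range (4 * n + 4),
    ((if (if o e then (exEnds n e).2 else (exEnds n e).1) = x then (1 : ZMod 3) else 0)
      - (if (if o e then (exEnds n e).1 else (exEnds n e).2) = x then (1 : ZMod 3) else 0))

/-! Write `boolSign (o e) = ±1 ∈ ZMod 3` for the direction of edge `e` relative to its listed
direction. Every vertex condition becomes a linear equation in these signs, and since two signs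
whose sum is again a sign must both equal its negative, an equation with only two unknown signs
determines both. View the graph as a ladder with rungs `u_c v_{n+1-c}`. The orientation at `d`
and the condition at `u_2` fix the three edges from rung `2` to rung `3`; then the conditions at
`u_{c+1}` and `v_{n-c}` force the edges from rung `c` to rung `c + 1`, in a pattern of period `3`
in `c` that depends only on the sign `K` of `u_1 u_2`. The conditions at `v_n` and `u_1` make
`t u_1` leave `t`; for `n ≡ 2 (mod 3)` the pattern at rung `n - 1` and the conditions at `u_n`
and `v_1` make `t v_1` enter `t`. Then `p(t) = 0` at the degree-3 vertex `t` leaves no direction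
for `t w`. -/

open Finset

namespace OrientationCounterexample

def boolSign (b : Bool) : ZMod 3 := if b then 1 else -1

def columnPattern (K : Bool) (j : ZMod 3) : Bool × Bool × Bool :=
  if j = 0 then (K, K, K) else if j = 1 then (true, !K, !K) else (!K, false, false)

lemma columnPattern_succ (K : Bool) (j : ZMod 3) {a b q r : Bool}
    (hu : boolSign (columnPattern K j).1 -
      (boolSign a + boolSign r + boolSign (columnPattern K j).2.2) = 1)
    (hv : boolSign b + boolSign r + boolSign q - boolSign (columnPattern K j).2.1 = 1) :
    (a, b, q) = columnPattern K (j + 1) := by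
  revert K j a b q r; decide

lemma left_end_signs {K a q r b s x : Bool}
    (hu₂ : boolSign K - (boolSign a + boolSign false + boolSign q) = 1)
    (hvₙ : boolSign true + boolSign r + boolSign q - boolSign b = 1)
    (hu₁ : boolSign s - (boolSign K + boolSign x + boolSign r) = -1) :
    a = !K ∧ s = true := by
  revert K a q r b s x; decide

lemma right_end_signs_false {K a r w y z : Bool}
    (huₙ : boolSign true - (boolSign a + boolSign r + boolSign (!K)) = 1)
    (hv₁ : boolSign w + boolSign r - (boolSign (!K) + boolSign y) = 1)
    (ht : -(boolSign true + boolSign w + boolSign z) = 0) : False := by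
  revert K a r w y z; decide

section Incidence

variable {n : ℕ}

def headEdges (n x : ℕ) : Finset ℕ := (range (4 * n + 4)).filter fun e => (exEnds n e).2 = x

def tailEdges (n x : ℕ) : Finset ℕ := (range (4 * n + 4)).filter fun e => (exEnds n e).1 = x

lemma mem_headEdges {x e : ℕ} : e ∈ headEdges n x ↔ e < 4 * n + 4 ∧ (exEnds n e).2 = x := by
  rw [headEdges, mem_filter, mem_range]

lemma mem_tailEdges {x e : ℕ} : e ∈ tailEdges n x ↔ e < 4 * n + 4 ∧ (exEnds n e).1 = x := by
  rw [tailEdges, mem_filter, mem_range]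

lemma exEnds_fst_ne_snd (hn : 1 ≤ n) {e : ℕ} (he : e < 4 * n + 4) :
    (exEnds n e).1 ≠ (exEnds n e).2 := by
  unfold exEnds; split_ifs <;> grind

lemma exNet_eq_sum_sub_sum (o : ℕ → Bool) (x : ℕ) :
    exNet n o x = ∑ e ∈ headEdges n x, boolSign (o e) - ∑ e ∈ tailEdges n x, boolSign (o e) := by
  rw [headEdges, tailEdges, sum_filter, sum_filter, ← sum_sub_distrib, exNet]
  refine sum_congr rfl fun e _ => ?_
  unfold boolSign
  cases o e <;> split_ifs <;> norm_num

lemma exNet_t (o : ℕ → Bool) :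
    exNet n o 0 = -(boolSign (o 0) + boolSign (o (n + 1)) + boolSign (o (2 * n + 2))) := by
  have hh : headEdges n 0 = ∅ := by
    ext e; simp only [mem_headEdges, notMem_empty, iff_false]; unfold exEnds; split_ifs <;> grind
  have ht : tailEdges n 0 = {0, n + 1, 2 * n + 2} := by
    ext e; simp only [mem_tailEdges, mem_insert, mem_singleton]; unfold exEnds; split_ifs <;> grind
  rw [exNet_eq_sum_sub_sum, hh, ht, sum_empty,
    sum_insert (by simp only [mem_insert, mem_singleton]; omega), sum_pair (by omega)]
  ring

lemma exNet_u_one (o : ℕ → Bool) (hn : 1 ≤ n) :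
    exNet n o 1 = boolSign (o 0) -
      (boolSign (o 1) + boolSign (o (2 * n + 3)) + boolSign (o (2 * n + 5))) := by
  have hh : headEdges n 1 = {0} := by
    ext e; simp only [mem_headEdges, mem_singleton]; unfold exEnds; split_ifs <;> grind
  have ht : tailEdges n 1 = {1, 2 * n + 3, 2 * n + 5} := by
    ext e; simp only [mem_tailEdges, mem_insert, mem_singleton]; unfold exEnds; split_ifs <;> grind
  rw [exNet_eq_sum_sub_sum, hh, ht, sum_singleton,
    sum_insert (by simp only [mem_insert, mem_singleton]; omega), sum_pair (by omega)]
  ring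

lemma exNet_u_succ (o : ℕ → Bool) {c : ℕ} (hc : 1 ≤ c) (hcn : c < n) :
    exNet n o (c + 1) = boolSign (o c) -
      (boolSign (o (c + 1)) + boolSign (o (2 * n + 5 + c)) + boolSign (o (3 * n + 4 + c))) := by
  have hh : headEdges n (c + 1) = {c} := by
    ext e; simp only [mem_headEdges, mem_singleton]; unfold exEnds; split_ifs <;> grind
  have ht : tailEdges n (c + 1) = {c + 1, 2 * n + 5 + c, 3 * n + 4 + c} := by
    ext e; simp only [mem_tailEdges, mem_insert, mem_singleton]; unfold exEnds; split_ifs <;> grind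
  rw [exNet_eq_sum_sub_sum, hh, ht, sum_singleton,
    sum_insert (by simp only [mem_insert, mem_singleton]; omega), sum_pair (by omega)]
  ring

lemma headEdges_v {c : ℕ} (hc : c + 2 ≤ n) :
    headEdges n (2 * n + 1 - c) = {2 * n - c, 2 * n + 5 + c, 3 * n + 5 + c} := by
  ext e; simp only [mem_headEdges, mem_insert, mem_singleton]; unfold exEnds; split_ifs <;> grind

lemma tailEdges_v {c : ℕ} (hc : c + 2 ≤ n) : tailEdges n (2 * n + 1 - c) = {2 * n + 1 - c} := by
  ext e; simp only [mem_tailEdges, mem_singleton]; unfold exEnds; split_ifs <;> grind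

lemma exNet_v (o : ℕ → Bool) {c : ℕ} (hc : c + 2 ≤ n) :
    exNet n o (2 * n + 1 - c) = boolSign (o (2 * n - c)) + boolSign (o (2 * n + 5 + c)) +
      boolSign (o (3 * n + 5 + c)) - boolSign (o (2 * n + 1 - c)) := by
  rw [exNet_eq_sum_sub_sum, headEdges_v hc, tailEdges_v hc, sum_singleton,
    sum_insert (by simp only [mem_insert, mem_singleton]; omega), sum_pair (by omega)]
  ring

lemma exNet_v_one (o : ℕ → Bool) (hn : 1 ≤ n) :
    exNet n o (n + 2) = boolSign (o (n + 1)) + boolSign (o (3 * n + 4)) -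
      (boolSign (o (n + 2)) + boolSign (o (2 * n + 4))) := by
  have hh : headEdges n (n + 2) = {n + 1, 3 * n + 4} := by
    ext e; simp only [mem_headEdges, mem_insert, mem_singleton]; unfold exEnds; split_ifs <;> grind
  have ht : tailEdges n (n + 2) = {n + 2, 2 * n + 4} := by
    ext e; simp only [mem_tailEdges, mem_insert, mem_singleton]; unfold exEnds; split_ifs <;> grind
  rw [exNet_eq_sum_sub_sum, hh, ht, sum_pair (by omega), sum_pair (by omega)]

end Incidence

lemma exP_eq_one {n x : ℕ} (ht : x ≠ 0) (hw : x ≠ n + 1) (hu : x ≠ 1) (hd : x ≠ 2 * n) :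
    exP n x = 1 := by
  simp [exP, ht, hw, hu, hd]

section Propagation

variable {n : ℕ} {o : ℕ → Bool}

def IsSourceAt (n : ℕ) (o : ℕ → Bool) (x : ℕ) : Prop :=
  ∀ e ∈ range (4 * n + 4), ((exEnds n e).1 = x ∨ (exEnds n e).2 = x) →
    (if o e then (exEnds n e).1 else (exEnds n e).2) = x

def IsPrescribed (n : ℕ) (o : ℕ → Bool) : Prop :=
  ∀ x ∈ range (2 * n + 2), exNet n o x = exP n x

lemma IsSourceAt.eq_false (hn : 1 ≤ n) {x e : ℕ} (hx : IsSourceAt n o x)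
    (he : e ∈ headEdges n x) : o e = false := by
  rw [mem_headEdges] at he
  have hout := hx e (mem_range.2 he.1) (Or.inr he.2)
  cases hoe : o e
  · rfl
  · rw [hoe, if_pos rfl, ← he.2] at hout
    exact absurd hout (exEnds_fst_ne_snd hn he.1)

lemma IsSourceAt.eq_true (hn : 1 ≤ n) {x e : ℕ} (hx : IsSourceAt n o x)
    (he : e ∈ tailEdges n x) : o e = true := by
  rw [mem_tailEdges] at he
  have hout := hx e (mem_range.2 he.1) (Or.inl he.2)
  cases hoe : o e
  · rw [hoe, if_neg Bool.false_ne_true, ← he.2] at hout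
    exact absurd hout.symm (exEnds_fst_ne_snd hn he.1)
  · rfl

lemma IsPrescribed.exNet_eq_one (hp : IsPrescribed n o) {x : ℕ} (hx : x < 2 * n + 2)
    (ht : x ≠ 0) (hw : x ≠ n + 1) (hu : x ≠ 1) (hd : x ≠ 2 * n) : exNet n o x = 1 :=
  (hp x (mem_range.2 hx)).trans (exP_eq_one ht hw hu hd)

-- The edges `u_c u_{c+1}`, `v_{n-c} v_{n+1-c}` and `u_{c+1} v_{n+1-c}` from rung `c` to rung `c+1`.
def column (n : ℕ) (o : ℕ → Bool) (c : ℕ) : Bool × Bool × Bool :=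
  (o c, o (2 * n + 1 - c), o (3 * n + 4 + c))

lemma column_succ {K : Bool} {c : ℕ} (hc : 1 ≤ c) (hcn : c + 2 ≤ n)
    (hu : exNet n o (c + 1) = 1) (hv : exNet n o (2 * n + 1 - c) = 1)
    (h : column n o c = columnPattern K c) :
    column n o (c + 1) = columnPattern K ((c + 1 : ℕ) : ZMod 3) := by
  rw [exNet_u_succ o hc (by omega)] at hu
  rw [exNet_v o hcn] at hv
  rw [column] at h
  rw [column, Nat.cast_succ, show 2 * n + 1 - (c + 1) = 2 * n - c by omega,
    show 3 * n + 4 + (c + 1) = 3 * n + 5 + c by omega]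
  exact columnPattern_succ K c (by rw [← h]; exact hu) (by rw [← h]; exact hv)

lemma IsPrescribed.column_eq_columnPattern (hp : IsPrescribed n o) {K : Bool}
    (h₂ : column n o 2 = columnPattern K (2 : ℕ)) {c : ℕ} (hc : 2 ≤ c) (hcn : c + 1 ≤ n) :
    column n o c = columnPattern K c := by
  induction c, hc using Nat.le_induction with
  | base => exact h₂
  | succ c hc ih =>
    exact column_succ (by omega) (by omega)
      (hp.exNet_eq_one (by omega) (by omega) (by omega) (by omega) (by omega))
      (hp.exNet_eq_one (by omega) (by omega) (by omega) (by omega) (by omega)) (ih (by omega))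

lemma left_end (hn : 3 ≤ n) (hd : IsSourceAt n o (2 * n)) (hp : IsPrescribed n o) :
    column n o 2 = columnPattern (o 1) (2 : ℕ) ∧ o 0 = true := by
  have hin := headEdges_v (n := n) (c := 1) (by omega)
  have hout := tailEdges_v (n := n) (c := 1) (by omega)
  rw [show 2 * n + 1 - 1 = 2 * n by omega] at hin hout
  have hd₁ : o (2 * n - 1) = false := hd.eq_false (by omega) (by rw [hin]; simp)
  have hd₂ : o (2 * n + 5 + 1) = false := hd.eq_false (by omega) (by rw [hin]; simp)
  have hd₃ : o (3 * n + 5 + 1) = false := hd.eq_false (by omega) (by rw [hin]; simp)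
  have hd₄ : o (2 * n) = true := hd.eq_true (by omega) (by rw [hout]; simp)
  have hu₂ := exNet_u_succ o (n := n) (c := 1) le_rfl (by omega)
  rw [hp.exNet_eq_one (by omega) (by omega) (by omega) (by omega) (by omega), hd₂] at hu₂
  have hvₙ := exNet_v o (n := n) (c := 0) (by omega)
  rw [hp.exNet_eq_one (by omega) (by omega) (by omega) (by omega) (by omega)] at hvₙ
  simp only [Nat.sub_zero, add_zero, hd₄] at hvₙ
  have hu₁ := exNet_u_one o (n := n) (by omega)
  rw [hp 1 (mem_range.2 (by omega)), show exP n 1 = -1 by simp [exP]; omega] at hu₁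
  obtain ⟨ha₂, hs₀⟩ := left_end_signs hu₂.symm hvₙ.symm hu₁.symm
  refine ⟨?_, hs₀⟩
  rw [column, show 2 * n + 1 - 2 = 2 * n - 1 by omega, ha₂, hd₁, hd₃]
  rfl

lemma right_end_false (hn : 3 ≤ n) (hp : IsPrescribed n o) (hs₀ : o 0 = true)
    (hcol : column n o (n - 1) = columnPattern (o 1) (1 : ℕ)) : False := by
  rw [column, show 2 * n + 1 - (n - 1) = n + 2 by omega,
    show 3 * n + 4 + (n - 1) = 4 * n + 3 by omega] at hcol
  obtain ⟨haₙ, hbₙ, hqₙ⟩ : o (n - 1) = true ∧ o (n + 2) = !o 1 ∧ o (4 * n + 3) = !o 1 :=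
    Prod.ext_iff.1 hcol |>.imp_right Prod.ext_iff.1
  have huₙ := exNet_u_succ o (n := n) (c := n - 1) (by omega) (by omega)
  rw [show n - 1 + 1 = n by omega, show 2 * n + 5 + (n - 1) = 3 * n + 4 by omega,
    show 3 * n + 4 + (n - 1) = 4 * n + 3 by omega, haₙ, hqₙ,
    hp.exNet_eq_one (by omega) (by omega) (by omega) (by omega) (by omega)] at huₙ
  have hv₁ := exNet_v_one o (n := n) (by omega)
  rw [hbₙ, hp.exNet_eq_one (by omega) (by omega) (by omega) (by omega) (by omega)] at hv₁
  have ht := exNet_t o (n := n)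
  rw [hs₀, hp 0 (mem_range.2 (by omega)), show exP n 0 = 0 by simp [exP]] at ht
  exact right_end_signs_false huₙ.symm hv₁.symm ht.symm

end Propagation

theorem not_exists_isSourceAt_isPrescribed {n : ℕ} (hn : 5 ≤ n) (hmod : n % 3 = 2) :
    ¬ ∃ o : ℕ → Bool, IsSourceAt n o (2 * n) ∧ IsPrescribed n o := by
  rintro ⟨o, hd, hp⟩
  obtain ⟨h₂, hs₀⟩ := left_end (by omega) hd hp
  have hcol := hp.column_eq_columnPattern h₂ (c := n - 1) (by omega) (by omega)
  rw [← ZMod.natCast_mod, show (n - 1) % 3 = 1 by omega] at hcol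
  exact right_end_false (by omega) hp hs₀ hcol

end OrientationCounterexample

/-- The counterexample: for every `k ≥ 0`, with `n = 3k+5`, the plane-drawable
graph `G` above with the directed vertex `d = v_{n-1}` (all four incident
edges directed out of `d`) and the valid prescription `exP` admits no
orientation extending the orientation at `d` with
`indegree(v) - outdegree(v) ≡ p(v) (mod 3)` at every vertex. -/
theorem stmt_9 (k : ℕ) :
    ¬ ∃ o : ℕ → Bool,
      (∀ e ∈ Finset.range (4 * (3 * k + 5) + 4),
        ((exEnds (3 * k + 5) e).1 = 2 * (3 * k + 5) ∨
          (exEnds (3 * k + 5) e).2 = 2 * (3 * k + 5)) →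
        (if o e then (exEnds (3 * k + 5) e).1 else (exEnds (3 * k + 5) e).2)
          = 2 * (3 * k + 5)) ∧
      (∀ x ∈ Finset.range (2 * (3 * k + 5) + 2),
        exNet (3 * k + 5) o x = exP (3 * k + 5) x) :=
  OrientationCounterexample.not_exists_isSourceAt_isPrescribed (by omega) (by omega)
end
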